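/- arXiv:2304.07484 — 5 statements merged into one kernel-verified Lean document; each statement's English description precedes it below -/
import Mathlib

section
/- Let x_1, …, x_p be a basis of ℝ^p and define w_i(β) = exp(⟨x_i,β⟩)/(1+exp(⟨x_i,β⟩))^2. Then there exists a constant c > 0 such that for all r > 0, sup over unit vectors u of ∏_{i=1}^p w_i(r u) ≤ exp(−c r); in particular this supremum tends to 0 as r → ∞. -/
/-!
Since `exp z / (1 + exp z) ^ 2 ≤ exp (-|z|)`, the product at `r • u` is at most
`exp (-r * ∑ i, |⟪x i, u⟫|)`. Because the `x i` span the space, `u ↦ (⟪x i, u⟫)ᵢ` is injective,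
hence bounded below by a multiple of the norm in finite dimension; this gives
`∑ i, |⟪x i, u⟫| ≥ c > 0` on the unit sphere.
-/

open Real Finset
open scoped RealInnerProductSpace

theorem exp_div_one_add_exp_sq_le_exp_neg_abs (z : ℝ) :
    exp z / (1 + exp z) ^ 2 ≤ exp (-|z|) := by
  wlog hz : 0 ≤ z generalizing z
  · -- both sides are even in `z`
    have h := this (-z) (by linarith)
    rw [abs_neg, exp_neg] at h
    convert h using 1
    field_simp
    ring
  rw [abs_of_nonneg hz, exp_neg, div_le_iff₀ (by positivity)]
  field_simp
  nlinarith [exp_pos z]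

section
variable {ι E : Type*} [Fintype ι] [NormedAddCommGroup E] [InnerProductSpace ℝ E]

theorem exists_pos_mul_norm_le_sum_abs_inner [FiniteDimensional ℝ E] {x : ι → E}
    (hx : Submodule.span ℝ (Set.range x) = ⊤) :
    ∃ c > 0, ∀ u : E, c * ‖u‖ ≤ ∑ i, |⟪x i, u⟫| := by
  let T : E →ₗ[ℝ] ι → ℝ := LinearMap.pi fun i => innerₗ E (x i)
  have hT : LinearMap.ker T = ⊥ := by
    refine LinearMap.ker_eq_bot'.mpr fun u hu => ?_
    have hperp : Set.range x ⊆ (ℝ ∙ u)ᗮ := by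
      rintro _ ⟨i, rfl⟩
      rw [SetLike.mem_coe, Submodule.mem_orthogonal_singleton_iff_inner_left]
      exact congrFun hu i
    have hu : u ∈ (ℝ ∙ u)ᗮ := (Submodule.span_le.mpr hperp) (hx ▸ Submodule.mem_top)
    exact inner_self_eq_zero.mp (Submodule.mem_orthogonal_singleton_iff_inner_left.mp hu)
  obtain ⟨K, hK, hT⟩ := T.exists_antilipschitzWith hT
  refine ⟨K⁻¹, by positivity, fun u => ?_⟩
  have hsup : ‖T u‖ ≤ ∑ i, |⟪x i, u⟫| :=
    (pi_norm_le_iff_of_nonneg (by positivity)).mpr fun i =>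
      single_le_sum (f := fun i => |⟪x i, u⟫|) (fun i _ => abs_nonneg _) (mem_univ i)
  rw [inv_mul_le_iff₀ (by exact_mod_cast hK)]
  exact (ZeroHomClass.bound_of_antilipschitz T hT u).trans (by gcongr)

theorem prod_le_exp_neg_mul_sum_abs_inner {w : ℝ → ℝ} (hw0 : ∀ z, 0 ≤ w z)
    (hw : ∀ z, w z ≤ exp (-|z|)) (x : ι → E) {r : ℝ} (hr : 0 ≤ r) (u : E) :
    ∏ i, w ⟪x i, r • u⟫ ≤ exp (-(r * ∑ i, |⟪x i, u⟫|)) :=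
  calc ∏ i, w ⟪x i, r • u⟫
      ≤ ∏ i, exp (-|⟪x i, r • u⟫|) := prod_le_prod (fun i _ => hw0 _) fun i _ => hw _
    _ = exp (-(r * ∑ i, |⟪x i, u⟫|)) := by
        simp only [← exp_sum, real_inner_smul_right, abs_mul, abs_of_nonneg hr, mul_sum,
          sum_neg_distrib]

end

theorem stmt_3_general (p : ℕ)
    (x : Fin p → EuclideanSpace ℝ (Fin p))
    (hx : LinearIndependent ℝ x)
    (w : ℝ → ℝ) (hw : ∀ z, w z = Real.exp z / (1 + Real.exp z) ^ 2) :
    ∃ c > (0 : ℝ),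
      (∀ r > (0 : ℝ), ∀ u : EuclideanSpace ℝ (Fin p), ‖u‖ = 1 →
        ∏ i, w (inner ℝ (x i) (r • u) : ℝ) ≤ Real.exp (-c * r)) ∧
      Filter.Tendsto
        (fun r : ℝ => ⨆ u : {u : EuclideanSpace ℝ (Fin p) // ‖u‖ = 1},
          ∏ i, w (inner ℝ (x i) (r • (u : EuclideanSpace ℝ (Fin p))) : ℝ))
        Filter.atTop (nhds 0) := by
  have hw0 (z : ℝ) : 0 ≤ w z := hw z ▸ by positivity
  have hw_le (z : ℝ) : w z ≤ exp (-|z|) := hw z ▸ exp_div_one_add_exp_sq_le_exp_neg_abs z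
  obtain ⟨c, hc, hc_le⟩ :=
    exists_pos_mul_norm_le_sum_abs_inner (hx.span_eq_top_of_card_eq_finrank' (by simp))
  have hbound (r : ℝ) (hr : 0 < r) (u : EuclideanSpace ℝ (Fin p)) (hu : ‖u‖ = 1) :
      ∏ i, w ⟪x i, r • u⟫ ≤ exp (-c * r) := by
    have hsum : c ≤ ∑ i, |⟪x i, u⟫| := by simpa [hu] using hc_le u
    refine (prod_le_exp_neg_mul_sum_abs_inner hw0 hw_le x hr.le u).trans (exp_le_exp.mpr ?_)
    nlinarith
  refine ⟨c, hc, hbound, squeeze_zero' ?_ ?_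
    (tendsto_exp_atBot.comp (Filter.tendsto_id.const_mul_atTop_of_neg (neg_neg_of_pos hc)))⟩
  · exact .of_forall fun r => Real.iSup_nonneg fun u => prod_nonneg fun i _ => hw0 _
  · filter_upwards [Filter.eventually_gt_atTop 0] with r hr
    exact Real.iSup_le (fun u => hbound r hr u u.2) (exp_pos _).le

theorem stmt_3 (p : ℕ) (hp : 1 ≤ p)
    (x : Fin p → EuclideanSpace ℝ (Fin p))
    (hx : LinearIndependent ℝ x)
    (w : ℝ → ℝ) (hw : ∀ z, w z = Real.exp z / (1 + Real.exp z) ^ 2) :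
    ∃ c > (0 : ℝ),
      (∀ r > (0 : ℝ), ∀ u : EuclideanSpace ℝ (Fin p), ‖u‖ = 1 →
        ∏ i, w (inner ℝ (x i) (r • u) : ℝ) ≤ Real.exp (-c * r)) ∧
      Filter.Tendsto
        (fun r : ℝ => ⨆ u : {u : EuclideanSpace ℝ (Fin p) // ‖u‖ = 1},
          ∏ i, w (inner ℝ (x i) (r • (u : EuclideanSpace ℝ (Fin p))) : ℝ))
        Filter.atTop (nhds 0) :=
  stmt_3_general p x hx w hw
end

section
/- Let X ∈ ℝ^{n×p} with rows x_1,…,x_n have full column rank, let m_1,…,m_n be positive reals, and let W(β) = diag(w_1(β),…,w_n(β)) with w_i(β) = exp(⟨x_i,β⟩)/(1+exp(⟨x_i,β⟩))^2 and M = diag(m_1,…,m_n). Then sup over unit vectors u ∈ ℝ^p of det(Xᵀ M W(r u) X) tends to 0 as r → ∞. -/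
open Matrix Filter Module

/-! With `x i` the rows of `X` and `t i = ⟪x i, u⟫`, the matrix `Xᵀ M W(r u) X` acts on
`EuclideanSpace ℝ (Fin p)` as `v ↦ ∑ i, m i w(r t i) ⟪x i, v⟫ x i`. Since `w ≤ 1` this operator is
bounded uniformly in `r` and `u`, and since `|z| w(z) ≤ 1` its value at `u` is `O(1/r)`. In an
orthonormal basis starting with `u` the matrix of the operator therefore has one column of size
`O(1/r)` and bounded entries elsewhere, so the Leibniz expansion makes the determinant `O(1/r)`
uniformly in `u`. -/

theorem Real.abs_iSup_le {ι : Sort*} {f : ι → ℝ} {a : ℝ} (hf : ∀ i, |f i| ≤ a) (ha : 0 ≤ a) :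
    |⨆ i, f i| ≤ a := by
  refine abs_le.2 ⟨?_, Real.iSup_le (fun i => (abs_le.1 (hf i)).2) ha⟩
  rcases isEmpty_or_nonempty ι with hι | ⟨⟨i⟩⟩
  · simpa [Real.iSup_of_isEmpty] using ha
  · exact (abs_le.1 (hf i)).1.trans
      (le_ciSup ⟨a, Set.forall_mem_range.2 fun j => (abs_le.1 (hf j)).2⟩ i)

theorem Matrix.abs_det_le_factorial_mul_prod {ι : Type*} [Fintype ι] [DecidableEq ι]
    (B : Matrix ι ι ℝ) (c : ι → ℝ) (hB : ∀ i j, |B i j| ≤ c j) :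
    |B.det| ≤ (Fintype.card ι).factorial * ∏ j, c j := by
  have hterm (σ : Equiv.Perm ι) : |Equiv.Perm.sign σ • ∏ j, B (σ j) j| ≤ ∏ j, c j := by
    have hsign : |Equiv.Perm.sign σ • ∏ j, B (σ j) j| = |∏ j, B (σ j) j| := by
      rcases Int.units_eq_one_or (Equiv.Perm.sign σ) with h | h <;> simp [h]
    rw [hsign, Finset.abs_prod]
    exact Finset.prod_le_prod (fun j _ => abs_nonneg _) fun j _ => hB _ _
  calc |B.det| ≤ ∑ σ : Equiv.Perm ι, |Equiv.Perm.sign σ • ∏ j, B (σ j) j| := by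
        rw [det_apply]; exact Finset.abs_sum_le_sum_abs _ _
    _ ≤ ∑ _σ : Equiv.Perm ι, ∏ j, c j := Finset.sum_le_sum fun σ _ => hterm σ
    _ = _ := by simp [Fintype.card_perm]

theorem LinearMap.abs_det_le_of_norm_apply_le {E : Type*} [NormedAddCommGroup E]
    [InnerProductSpace ℝ E] [FiniteDimensional ℝ E] (f : E →ₗ[ℝ] E) {u : E} (hu : ‖u‖ = 1)
    {c : ℝ} (hf : ∀ v, ‖f v‖ ≤ c * ‖v‖) :
    |LinearMap.det f| ≤ (finrank ℝ E).factorial * ‖f u‖ * c ^ (finrank ℝ E - 1) := by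
  obtain ⟨k, hk⟩ : ∃ k, finrank ℝ E = k + 1 := by
    have : Nontrivial E := ⟨⟨u, 0, by rintro rfl; simp at hu⟩⟩
    exact Nat.exists_eq_add_one_of_ne_zero finrank_pos.ne'
  have hu' : Orthonormal ℝ (({0} : Set (Fin (k + 1))).domRestrict fun _ => u) :=
    ⟨fun _ => hu, fun i j hij => absurd (Subsingleton.elim i j) hij⟩
  obtain ⟨b, hb⟩ := hu'.exists_orthonormalBasis_extension_of_card_eq (by simpa using hk)
  -- the matrix entries are `⟪b i, f (b j)⟫`, and `b 0 = u`
  have hentry (i j) :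
      |toMatrix b.toBasis b.toBasis f i j| ≤ (Fin.cons ‖f u‖ fun _ => c : Fin (k + 1) → ℝ) j := by
    rw [LinearMap.toMatrix_apply, b.coe_toBasis, b.coe_toBasis_repr_apply, b.repr_apply_apply]
    refine (abs_real_inner_le_norm _ _).trans ?_
    rw [b.orthonormal.1, one_mul]
    cases j using Fin.cases with
    | zero => simp [hb 0 rfl]
    | succ j => simpa [b.orthonormal.1] using hf (b j.succ)
  rw [← LinearMap.det_toMatrix b.toBasis, hk, Nat.add_sub_cancel]
  simpa [Fin.prod_univ_succ, mul_assoc] using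
    (toMatrix b.toBasis b.toBasis f).abs_det_le_factorial_mul_prod _ hentry

theorem norm_sum_mul_inner_smul_le {ι E : Type*} [Fintype ι] [NormedAddCommGroup E]
    [InnerProductSpace ℝ E] (x : ι → E) {D M : ι → ℝ} (hD : ∀ i, |D i| ≤ M i) (v : E) :
    ‖∑ i, (D i * inner ℝ (x i) v) • x i‖ ≤ (∑ i, M i * ‖x i‖ ^ 2) * ‖v‖ := by
  rw [Finset.sum_mul]
  refine (norm_sum_le _ _).trans (Finset.sum_le_sum fun i _ => ?_)
  rw [norm_smul, Real.norm_eq_abs, abs_mul]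
  calc |D i| * |inner ℝ (x i) v| * ‖x i‖ ≤ M i * (‖x i‖ * ‖v‖) * ‖x i‖ := by
        gcongr
        · exact (abs_nonneg _).trans (hD i)
        · exact hD i
        · exact abs_real_inner_le_norm _ _
    _ = M i * ‖x i‖ ^ 2 * ‖v‖ := by ring

theorem Matrix.toEuclideanLin_transpose_mul_diagonal_mul {n p : Type*} [Fintype n] [Fintype p]
    [DecidableEq n] [DecidableEq p] (X : Matrix n p ℝ) (D : n → ℝ) (v : EuclideanSpace ℝ p) :
    toEuclideanLin (Xᵀ * diagonal D * X) v =
      ∑ i, (D i * inner ℝ (WithLp.toLp 2 (X i)) v) • WithLp.toLp 2 (X i) := by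
  ext j
  rw [toLpLin_apply, WithLp.ofLp_toLp, ← mulVec_mulVec, ← mulVec_mulVec]
  simp only [mulVec, dotProduct, diagonal_apply, ite_mul, zero_mul, Finset.sum_ite_eq,
    Finset.mem_univ, if_true, transpose_apply, PiLp.inner_apply, WithLp.ofLp_sum,
    WithLp.ofLp_smul, Finset.sum_apply, Pi.smul_apply, smul_eq_mul, RCLike.inner_apply, conj_trivial]
  simp_rw [mul_comm (v.ofLp _)]
  exact Finset.sum_congr rfl fun _ _ => by ring

noncomputable def logisticWeight (z : ℝ) : ℝ := Real.exp z / (1 + Real.exp z) ^ 2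

theorem logisticWeight_nonneg (z : ℝ) : 0 ≤ logisticWeight z := by
  unfold logisticWeight; positivity

theorem logisticWeight_le_one (z : ℝ) : logisticWeight z ≤ 1 := by
  rw [logisticWeight, div_le_one (by positivity)]
  nlinarith [Real.exp_pos z]

theorem abs_mul_logisticWeight_le_one (z : ℝ) : |z| * logisticWeight z ≤ 1 := by
  rw [logisticWeight, mul_div_assoc', div_le_one (by positivity)]
  rcases le_or_gt 0 z with hz | hz
  · rw [abs_of_nonneg hz]
    nlinarith [Real.add_one_le_exp z, Real.exp_pos z]
  · have h : -z * Real.exp z ≤ 1 :=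
      calc -z * Real.exp z ≤ Real.exp (-z) * Real.exp z := by
            gcongr; linarith [Real.add_one_le_exp (-z)]
        _ = 1 := by rw [← Real.exp_add, neg_add_cancel, Real.exp_zero]
    rw [abs_of_neg hz]
    nlinarith [Real.exp_pos z]

theorem abs_mul_logisticWeight_mul_le_one_div {r : ℝ} (hr : 0 < r) (t : ℝ) :
    |t| * logisticWeight (r * t) ≤ 1 / r := by
  have := abs_mul_logisticWeight_le_one (r * t)
  rw [abs_mul, abs_of_pos hr] at this
  rw [le_div_iff₀ hr]
  linarith

theorem abs_det_transpose_mul_diagonal_logisticWeight_mul_le {n p : ℕ}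
    (X : Matrix (Fin n) (Fin p) ℝ) {m : Fin n → ℝ} (hm : ∀ i, 0 ≤ m i) {r : ℝ} (hr : 0 < r)
    {u : EuclideanSpace ℝ (Fin p)} (hu : ‖u‖ = 1) :
    let x i : EuclideanSpace ℝ (Fin p) := WithLp.toLp 2 (X i)
    |(Xᵀ * diagonal (fun i => m i * logisticWeight (r * inner ℝ (x i) u)) * X).det| ≤
      p.factorial * (∑ i, m i * ‖x i‖) * (∑ i, m i * ‖x i‖ ^ 2) ^ (p - 1) / r := by
  intro x
  set D := fun i => m i * logisticWeight (r * inner ℝ (x i) u)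
  have hD0 (i : Fin n) : 0 ≤ D i := mul_nonneg (hm i) (logisticWeight_nonneg _)
  have hD (i : Fin n) : |D i| ≤ m i := by
    rw [abs_of_nonneg (hD0 i)]
    exact mul_le_of_le_one_right (hm i) (logisticWeight_le_one _)
  have hDu (i : Fin n) : |D i * inner ℝ (x i) u| ≤ m i / r :=
    calc |D i * inner ℝ (x i) u|
        = m i * (|inner ℝ (x i) u| * logisticWeight (r * inner ℝ (x i) u)) := by
          rw [abs_mul, abs_of_nonneg (hD0 i)]; ring
      _ ≤ m i * (1 / r) := by gcongr; exacts [hm i, abs_mul_logisticWeight_mul_le_one_div hr _]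
      _ = m i / r := by ring
  set f := toEuclideanLin (Xᵀ * diagonal D * X)
  have hf (v : EuclideanSpace ℝ (Fin p)) : ‖f v‖ ≤ (∑ i, m i * ‖x i‖ ^ 2) * ‖v‖ := by
    rw [toEuclideanLin_transpose_mul_diagonal_mul]
    exact norm_sum_mul_inner_smul_le x hD v
  have hfu : ‖f u‖ ≤ (∑ i, m i * ‖x i‖) / r := by
    rw [toEuclideanLin_transpose_mul_diagonal_mul, Finset.sum_div]
    refine (norm_sum_le _ _).trans (Finset.sum_le_sum fun i _ => ?_)
    rw [norm_smul, Real.norm_eq_abs, mul_div_right_comm]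
    gcongr
    exact hDu i
  have hc : 0 ≤ ∑ i, m i * ‖x i‖ ^ 2 := Finset.sum_nonneg fun i _ => by have := hm i; positivity
  rw [← LinearMap.det_toLpLin 2]
  refine (LinearMap.abs_det_le_of_norm_apply_le f hu hf).trans ?_
  rw [finrank_euclideanSpace_fin, mul_div_right_comm, mul_div_assoc]
  gcongr

theorem stmt_4_general (n p : ℕ) (X : Matrix (Fin n) (Fin p) ℝ)
    (m : Fin n → ℝ) (hm : ∀ i, 0 < m i)
    (w : ℝ → ℝ) (hw : ∀ z, w z = Real.exp z / (1 + Real.exp z) ^ 2)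
    (W : EuclideanSpace ℝ (Fin p) → Matrix (Fin n) (Fin n) ℝ)
    (hW : ∀ β, W β = Matrix.diagonal (fun i => w (∑ j, X i j * β j))) :
    Filter.Tendsto
      (fun r : ℝ => ⨆ u : {u : EuclideanSpace ℝ (Fin p) // ‖u‖ = 1},
        (X.transpose * Matrix.diagonal m * W (r • (u : EuclideanSpace ℝ (Fin p))) * X).det)
      Filter.atTop (nhds 0) := by
  obtain rfl : w = logisticWeight := funext hw
  have hm₀ (i : Fin n) : 0 ≤ m i := (hm i).le
  set x : Fin n → EuclideanSpace ℝ (Fin p) := fun i => WithLp.toLp 2 (X i)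
  set K := p.factorial * (∑ i, m i * ‖x i‖) * (∑ i, m i * ‖x i‖ ^ 2) ^ (p - 1)
  have hK : 0 ≤ K := by
    have := Finset.sum_nonneg fun i (_ : i ∈ Finset.univ) => mul_nonneg (hm₀ i) (norm_nonneg (x i))
    have := Finset.sum_nonneg fun i (_ : i ∈ Finset.univ) => mul_nonneg (hm₀ i) (sq_nonneg ‖x i‖)
    positivity
  have hmat (r : ℝ) (u : EuclideanSpace ℝ (Fin p)) : Xᵀ * diagonal m * W (r • u) * X =
      Xᵀ * diagonal (fun i => m i * logisticWeight (r * inner ℝ (x i) u)) * X := by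
    rw [hW, Matrix.mul_assoc Xᵀ, diagonal_mul_diagonal]
    simp [x, PiLp.inner_apply, Finset.mul_sum, mul_comm, mul_left_comm]
  refine squeeze_zero_norm' ?_ ((tendsto_const_nhds (x := K)).div_atTop tendsto_id)
  filter_upwards [eventually_gt_atTop 0] with r hr
  refine Real.abs_iSup_le (fun u => ?_) (div_nonneg hK hr.le)
  rw [hmat]
  exact abs_det_transpose_mul_diagonal_logisticWeight_mul_le X hm₀ hr u.2

theorem stmt_4 (n p : ℕ) (X : Matrix (Fin n) (Fin p) ℝ)
    (hX : LinearIndependent ℝ (fun j : Fin p => (fun i => X i j : Fin n → ℝ)))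
    (m : Fin n → ℝ) (hm : ∀ i, 0 < m i)
    (w : ℝ → ℝ) (hw : ∀ z, w z = Real.exp z / (1 + Real.exp z) ^ 2)
    (W : EuclideanSpace ℝ (Fin p) → Matrix (Fin n) (Fin n) ℝ)
    (hW : ∀ β, W β = Matrix.diagonal (fun i => w (∑ j, X i j * β j))) :
    Filter.Tendsto
      (fun r : ℝ => ⨆ u : {u : EuclideanSpace ℝ (Fin p) // ‖u‖ = 1},
        (X.transpose * Matrix.diagonal m * W (r • (u : EuclideanSpace ℝ (Fin p))) * X).det)
      Filter.atTop (nhds 0) :=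
  stmt_4_general n p X m hm w hw W hW
end

section
/- There exists a constant c > 0 such that for all real z, (1+e^{|z|}) · φ(z)² / (Φ(z)(1−Φ(z))) < c, where φ and Φ are the standard normal density and CDF. -/
/-! For `z ≥ 0` we have `Φ z ≥ 1/2` and `1 - Φ z ≥ ∫_z^{z+1} φ ≥ φ (z + 1)`, while
`e^z φ(z)² = e^{(5 - (z-2)²)/2} φ(z+1) / √(2π) ≤ e^{5/2} φ(z+1)`. Together with `1 + e^z ≤ 2e^z`
this bounds `(1 + e^z) φ(z)² / (Φ(z)(1 - Φ(z)))` by `4e^{5/2}`. Negative `z` reduce to positive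
ones through `φ(-z) = φ(z)` and `Φ(-z) = 1 - Φ(z)`. -/

noncomputable def stdNormalPDF (z : ℝ) : ℝ :=
  Real.exp (-z ^ 2 / 2) / Real.sqrt (2 * Real.pi)

noncomputable def stdNormalCDF (z : ℝ) : ℝ :=
  ∫ t in Set.Iic z, stdNormalPDF t

open MeasureTheory Set Real ProbabilityTheory

lemma stdNormalPDF_eq_gaussianPDFReal : stdNormalPDF = gaussianPDFReal 0 1 := by
  ext z
  simp [stdNormalPDF, gaussianPDFReal, div_eq_inv_mul]

lemma stdNormalPDF_pos (z : ℝ) : 0 < stdNormalPDF z := by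
  unfold stdNormalPDF
  positivity

lemma integrable_stdNormalPDF : Integrable stdNormalPDF :=
  stdNormalPDF_eq_gaussianPDFReal ▸ integrable_gaussianPDFReal 0 1

lemma stdNormalPDF_neg (z : ℝ) : stdNormalPDF (-z) = stdNormalPDF z := by
  simp [stdNormalPDF]

lemma stdNormalPDF_le_of_sq_le {a b : ℝ} (h : a ^ 2 ≤ b ^ 2) : stdNormalPDF b ≤ stdNormalPDF a := by
  unfold stdNormalPDF
  gcongr

lemma one_sub_stdNormalCDF (z : ℝ) : 1 - stdNormalCDF z = ∫ t in Ioi z, stdNormalPDF t := by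
  have hsplit := integral_add_compl (measurableSet_Iic (a := z)) integrable_stdNormalPDF
  rw [compl_Iic, stdNormalPDF_eq_gaussianPDFReal, integral_gaussianPDFReal_eq_one 0 one_ne_zero]
    at hsplit
  rw [stdNormalCDF, stdNormalPDF_eq_gaussianPDFReal]
  linarith

lemma stdNormalCDF_neg (z : ℝ) : stdNormalCDF (-z) = 1 - stdNormalCDF z := by
  rw [one_sub_stdNormalCDF, stdNormalCDF, ← integral_comp_neg_Ioi]
  simp only [stdNormalPDF_neg]

lemma one_half_le_stdNormalCDF {z : ℝ} (hz : 0 ≤ z) : 1 / 2 ≤ stdNormalCDF z := by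
  have hzero : stdNormalCDF 0 = 1 / 2 := by
    linarith [neg_zero (G := ℝ) ▸ stdNormalCDF_neg 0]
  refine hzero ▸ setIntegral_mono_set integrable_stdNormalPDF.integrableOn
    (.of_forall fun t ↦ (stdNormalPDF_pos t).le) (.of_forall fun t ht ↦ ?_)
  exact le_trans ht hz

lemma stdNormalPDF_add_one_le_one_sub_stdNormalCDF {z : ℝ} (hz : 0 ≤ z) :
    stdNormalPDF (z + 1) ≤ 1 - stdNormalCDF z := by
  have hbound : ∀ t ∈ Ioc z (z + 1), stdNormalPDF (z + 1) ≤ stdNormalPDF t :=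
    fun t ht ↦ stdNormalPDF_le_of_sq_le (by nlinarith [ht.1, ht.2])
  have hunit := setIntegral_ge_of_const_le_real measurableSet_Ioc measure_Ioc_lt_top.ne hbound
    integrable_stdNormalPDF.integrableOn
  rw [measureReal_def, volume_Ioc, add_sub_cancel_left, ENNReal.ofReal_one, ENNReal.toReal_one,
    mul_one] at hunit
  rw [one_sub_stdNormalCDF]
  exact hunit.trans <| setIntegral_mono_set integrable_stdNormalPDF.integrableOn
    (.of_forall fun t ↦ (stdNormalPDF_pos t).le) (.of_forall fun t ht ↦ ht.1)

lemma exp_mul_stdNormalPDF_sq_le (z : ℝ) :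
    exp z * stdNormalPDF z ^ 2 ≤ exp (5 / 2) * stdNormalPDF (z + 1) := by
  have hexp : exp z * exp (-z ^ 2 / 2) ^ 2 =
      exp ((5 - (z - 2) ^ 2) / 2) * exp (-(z + 1) ^ 2 / 2) := by
    rw [← exp_nat_mul, ← exp_add, ← exp_add]; congr 1; push_cast; ring
  calc exp z * stdNormalPDF z ^ 2
      = exp z * exp (-z ^ 2 / 2) ^ 2 / √(2 * π) ^ 2 := by
        rw [stdNormalPDF, div_pow, mul_div_assoc]
    _ = exp ((5 - (z - 2) ^ 2) / 2) / √(2 * π) * stdNormalPDF (z + 1) := by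
        rw [hexp, stdNormalPDF]; ring
    _ ≤ exp (5 / 2) / 1 * stdNormalPDF (z + 1) := by
        have hsqrt : 1 ≤ √(2 * π) := one_le_sqrt.2 (by linarith [pi_gt_three])
        have := sq_nonneg (z - 2)
        have := (stdNormalPDF_pos (z + 1)).le
        gcongr
        linarith
    _ = exp (5 / 2) * stdNormalPDF (z + 1) := by rw [div_one]

noncomputable def probitWeight (z : ℝ) : ℝ :=
  stdNormalPDF z ^ 2 / (stdNormalCDF z * (1 - stdNormalCDF z))

lemma probitWeight_neg (z : ℝ) : probitWeight (-z) = probitWeight z := by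
  rw [probitWeight, probitWeight, stdNormalPDF_neg, stdNormalCDF_neg, sub_sub_cancel, mul_comm]

lemma one_add_exp_mul_probitWeight_le_of_nonneg {z : ℝ} (hz : 0 ≤ z) :
    (1 + exp z) * probitWeight z ≤ 4 * exp (5 / 2) := by
  have hcdf := one_half_le_stdNormalCDF hz
  have htail := stdNormalPDF_add_one_le_one_sub_stdNormalCDF hz
  have htail_pos : 0 < 1 - stdNormalCDF z := (stdNormalPDF_pos _).trans_le htail
  rw [probitWeight, mul_div_assoc', div_le_iff₀ (by positivity)]
  calc (1 + exp z) * stdNormalPDF z ^ 2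
      ≤ 2 * (exp z * stdNormalPDF z ^ 2) := by nlinarith [one_le_exp hz]
    _ ≤ 2 * (exp (5 / 2) * stdNormalPDF (z + 1)) :=
        mul_le_mul_of_nonneg_left (exp_mul_stdNormalPDF_sq_le z) zero_le_two
    _ ≤ 4 * exp (5 / 2) * (stdNormalCDF z * (1 - stdNormalCDF z)) := by
        have hprod : 1 / 2 * stdNormalPDF (z + 1) ≤ stdNormalCDF z * (1 - stdNormalCDF z) :=
          mul_le_mul hcdf htail (stdNormalPDF_pos _).le (by linarith)
        nlinarith [exp_pos (5 / 2 : ℝ)]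

lemma one_add_exp_abs_mul_probitWeight_le (z : ℝ) :
    (1 + exp |z|) * probitWeight z ≤ 4 * exp (5 / 2) := by
  rcases le_total 0 z with hz | hz
  · rw [abs_of_nonneg hz]
    exact one_add_exp_mul_probitWeight_le_of_nonneg hz
  · rw [abs_of_nonpos hz, ← probitWeight_neg]
    exact one_add_exp_mul_probitWeight_le_of_nonneg (neg_nonneg.2 hz)

theorem stmt_10 :
    ∃ c > (0 : ℝ), ∀ z : ℝ,
      (1 + Real.exp |z|) * (stdNormalPDF z) ^ 2 /
        (stdNormalCDF z * (1 - stdNormalCDF z)) < c := by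
  refine ⟨4 * exp (5 / 2) + 1, by positivity, fun z ↦ ?_⟩
  rw [mul_div_assoc]
  exact (one_add_exp_abs_mul_probitWeight_le z).trans_lt (lt_add_one _)
end

section
/- There exists a constant c such that for all real z, (1+e^{|z|}) · e^{−2z}/(exp(e^{−z}) − 1) < c. -/
theorem stmt_13 :
    ∃ c : ℝ, ∀ z : ℝ,
      (1 + Real.exp |z|) * Real.exp (-2 * z) / (Real.exp (Real.exp (-z)) - 1) < c := by
  use 13
  intro z
  set x := Real.exp (-z) with hxdef
  have hx : 0 < x := Real.exp_pos _
  have hx2 : Real.exp (-2 * z) = x ^ 2 := by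
    rw [show (-2 * z) = -z + -z by ring, Real.exp_add]; ring
  have hd1 : x < Real.exp x - 1 := by
    have := Real.add_one_lt_exp (ne_of_gt hx); linarith
  have hd3 : 1 + x + x ^ 2 / 2 + x ^ 3 / 6 ≤ Real.exp x := by
    have h := Real.sum_le_exp_of_nonneg hx.le 4
    simp [Finset.sum_range_succ, Nat.factorial] at h
    nlinarith [h]
  have hdpos : 0 < Real.exp x - 1 := by linarith
  rw [hx2, div_lt_iff₀ hdpos]
  rcases le_or_gt 0 z with hz | hz
  · have habs : |z| = z := abs_of_nonneg hz
    have hinv : Real.exp z * x = 1 := by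
      rw [hxdef, ← Real.exp_add]; simp
    have hxle : x ≤ 1 := Real.exp_le_one_iff.mpr (by linarith)
    rw [habs]
    nlinarith [sq_nonneg x, mul_pos hx hx, Real.exp_pos z]
  · have habs : |z| = -z := abs_of_neg hz
    have hx1 : 1 < x := by
      rw [hxdef, show (1:ℝ) = Real.exp 0 from Real.exp_zero.symm]
      exact Real.exp_lt_exp.mpr (by linarith)
    rw [habs]
    nlinarith [mul_pos hx hx, sq_nonneg x]
end

section
/- Suppose w : ℝ → ℝ satisfies 0 ≤ w(z) ≤ c/(1+e^{|z|}) for all z, for some constant c > 0. Let x_1,…,x_n ∈ ℝ^p span ℝ^p (n ≥ p), m_i > 0, and W(β) = diag(w(⟨x_1,β⟩),…,w(⟨x_n,β⟩)). Then sup over unit vectors u of det(Xᵀ M W(r u) X) → 0 as r → ∞, where X has rows x_i and M = diag(m_i). -/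
/-!
Expanding the determinant multilinearly in its rows gives
`det (Xᵀ D X) = ∑_f (∏_j X_{f j, j} d_{f j}) det X_f` over all maps `f : Fin p → Fin n`, where `X_f`
has rows `x_{f 1}, …, x_{f p}`. A term with `X_f` singular vanishes. Otherwise
`u ↦ ∑_j |⟨x_{f j}, u⟩|` is bounded below by some `δ_f > 0` on the unit sphere, and since
`w z ≤ c e^{-|z|}` the weights of that term at `β = r u` contribute at most `c^p e^{-r δ_f}`.
As `Xᵀ D X` is positive semidefinite, the determinant is squeezed to `0` uniformly in `u`.
-/

open Filter Topology

namespace Matrix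

variable {ι κ R : Type*} [Fintype ι] [Fintype κ] [DecidableEq κ] [CommRing R]

theorem det_mul_eq_sum_prod_mul_det_submatrix (A : Matrix κ ι R) (B : Matrix ι κ R) :
    (A * B).det = ∑ f : κ → ι, (∏ j, A j (f j)) * (B.submatrix f id).det := by
  have hrows : A * B = of fun j => ∑ i, A j i • B i := by
    ext j k
    simp [mul_apply, Finset.sum_apply]
  rw [hrows]
  exact (detRowAlternating.toMultilinearMap.map_sum fun j i => A j i • B i).trans
    (Finset.sum_congr rfl fun f _ => det_mul_column (fun j => A j (f j)) (B.submatrix f id))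

theorem det_transpose_mul_diagonal_mul [DecidableEq ι] (X : Matrix ι κ R) (d : ι → R) :
    (Xᵀ * diagonal d * X).det
      = ∑ f : κ → ι, (∏ j, X (f j) j * d (f j)) * (X.submatrix f id).det := by
  simp only [det_mul_eq_sum_prod_mul_det_submatrix, mul_diagonal, transpose_apply]

theorem det_transpose_mul_diagonal_mul_nonneg [DecidableEq ι] (X : Matrix ι κ ℝ) {d : ι → ℝ}
    (hd : ∀ i, 0 ≤ d i) : 0 ≤ (Xᵀ * diagonal d * X).det := by
  simpa using ((posSemidef_diagonal_iff.mpr hd).conjTranspose_mul_mul_same X).det_nonneg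

theorem exists_pos_mul_norm_le_sum_abs_mulVec {A : Matrix κ κ ℝ} (hA : A.det ≠ 0) :
    ∃ δ > 0, ∀ u : EuclideanSpace ℝ κ, δ * ‖u‖ ≤ ∑ j, |(A *ᵥ u.ofLp) j| := by
  let L : EuclideanSpace ℝ κ →ₗ[ℝ] κ → ℝ :=
    A.mulVecLin ∘ₗ (WithLp.linearEquiv 2 ℝ (κ → ℝ)).toLinearMap
  have hL : LinearMap.ker L = ⊥ := by
    rw [LinearMap.ker_eq_bot]
    exact (mulVec_injective_iff_isUnit.mpr ((isUnit_iff_isUnit_det A).mpr hA.isUnit)).comp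
      (WithLp.linearEquiv 2 ℝ (κ → ℝ)).injective
  obtain ⟨K, hK, hanti⟩ := L.exists_antilipschitzWith hL
  refine ⟨(K : ℝ)⁻¹, by positivity, fun u => ?_⟩
  have hu : ‖u‖ ≤ K * ‖A *ᵥ u.ofLp‖ := by simpa [L] using hanti.le_mul_norm_sub 0 u
  have hsum : ‖A *ᵥ u.ofLp‖ ≤ ∑ j, |(A *ᵥ u.ofLp) j| :=
    (pi_norm_le_iff_of_nonneg (by positivity)).mpr fun j =>
      Finset.single_le_sum (f := fun j => |(A *ᵥ u.ofLp) j|) (fun _ _ => abs_nonneg _)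
        (Finset.mem_univ j)
  rw [inv_mul_le_iff₀ (by positivity)]
  exact hu.trans (mul_le_mul_of_nonneg_left hsum K.2)

end Matrix

open Matrix

section Weight

variable {w : ℝ → ℝ} {c : ℝ}

theorem le_mul_exp_neg_abs_of_le_div_one_add_exp (hc : 0 ≤ c)
    {z : ℝ} (hz : w z ≤ c / (1 + Real.exp |z|)) : w z ≤ c * Real.exp (-|z|) := by
  refine hz.trans ?_
  rw [Real.exp_neg, ← div_eq_mul_inv]
  gcongr
  linarith

variable {κ : Type*} [Fintype κ]

theorem prod_le_pow_mul_exp_neg_sum_abs (hc : 0 ≤ c)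
    (hw : ∀ z, 0 ≤ w z ∧ w z ≤ c / (1 + Real.exp |z|)) (v : κ → ℝ) {r : ℝ} (hr : 0 ≤ r) :
    ∏ j, w (r * v j) ≤ c ^ Fintype.card κ * Real.exp (-(r * ∑ j, |v j|)) := by
  calc ∏ j, w (r * v j) ≤ ∏ j, c * Real.exp (-(r * |v j|)) := by
        refine Finset.prod_le_prod (fun j _ => (hw _).1) fun j _ => ?_
        simpa [abs_mul, abs_of_nonneg hr] using
          le_mul_exp_neg_abs_of_le_div_one_add_exp hc (hw (r * v j)).2
    _ = c ^ Fintype.card κ * Real.exp (-(r * ∑ j, |v j|)) := by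
        rw [Finset.prod_mul_distrib, Finset.prod_const, Finset.card_univ, ← Real.exp_sum,
          Finset.mul_sum, ← Finset.sum_neg_distrib]

variable {ι : Type*} [DecidableEq κ]

theorem exists_forall_prod_mul_det_submatrix_le (hc : 0 ≤ c)
    (hw : ∀ z, 0 ≤ w z ∧ w z ≤ c / (1 + Real.exp |z|))
    (X : Matrix ι κ ℝ) (m : ι → ℝ) (f : κ → ι) :
    ∃ δ > 0, ∀ u : EuclideanSpace ℝ κ, ‖u‖ = 1 → ∀ r ≥ 0,
      (∏ j, X (f j) j * (m (f j) * w (r * (X *ᵥ u.ofLp) (f j)))) * (X.submatrix f id).det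
        ≤ |∏ j, X (f j) j * m (f j)| * |(X.submatrix f id).det| * c ^ Fintype.card κ
          * Real.exp (-(r * δ)) := by
  set B := X.submatrix f id
  by_cases hB : B.det = 0
  · exact ⟨1, one_pos, fun u _ r _ => by simp [hB]⟩
  obtain ⟨δ, hδ, hδu⟩ := exists_pos_mul_norm_le_sum_abs_mulVec hB
  refine ⟨δ, hδ, fun u hu r hr => ?_⟩
  have hBu : ∀ j, (X *ᵥ u.ofLp) (f j) = (B *ᵥ u.ofLp) j := fun j => rfl
  have hprod : 0 ≤ ∏ j, w (r * (B *ᵥ u.ofLp) j) := Finset.prod_nonneg fun j _ => (hw _).1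
  calc (∏ j, X (f j) j * (m (f j) * w (r * (X *ᵥ u.ofLp) (f j)))) * B.det
      = (∏ j, X (f j) j * m (f j)) * B.det * ∏ j, w (r * (B *ᵥ u.ofLp) j) := by
        simp only [hBu, ← mul_assoc, Finset.prod_mul_distrib]
        ring
    _ ≤ |∏ j, X (f j) j * m (f j)| * |B.det| * ∏ j, w (r * (B *ᵥ u.ofLp) j) := by
        rw [← abs_mul]
        exact mul_le_mul_of_nonneg_right (le_abs_self _) hprod
    _ ≤ |∏ j, X (f j) j * m (f j)| * |B.det| * (c ^ Fintype.card κ * Real.exp (-(r * δ))) := by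
        grw [prod_le_pow_mul_exp_neg_sum_abs hc hw _ hr, ← hδu u, hu, mul_one]
    _ = _ := by ring

end Weight

theorem stmt_17_general (n p : ℕ)
    (w : ℝ → ℝ) (c : ℝ) (hc : 0 < c)
    (hw : ∀ z : ℝ, 0 ≤ w z ∧ w z ≤ c / (1 + Real.exp |z|))
    (X : Matrix (Fin n) (Fin p) ℝ)
    (m : Fin n → ℝ) (hm : ∀ i, 0 < m i)
    (W : EuclideanSpace ℝ (Fin p) → Matrix (Fin n) (Fin n) ℝ)
    (hW : ∀ β, W β = Matrix.diagonal (fun i => w (∑ j, X i j * β j))) :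
    Filter.Tendsto
      (fun r : ℝ => ⨆ u : {u : EuclideanSpace ℝ (Fin p) // ‖u‖ = 1},
        (X.transpose * Matrix.diagonal m * W (r • (u : EuclideanSpace ℝ (Fin p))) * X).det)
      Filter.atTop (nhds 0) := by
  have hdiag : ∀ (r : ℝ) (u : EuclideanSpace ℝ (Fin p)),
      Xᵀ * diagonal m * W (r • u) * X
        = Xᵀ * diagonal (fun i => m i * w (r * (X *ᵥ u.ofLp) i)) * X := by
    intro r u
    simp only [hW, Matrix.mul_assoc Xᵀ, diagonal_mul_diagonal, PiLp.smul_apply, smul_eq_mul,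
      mulVec, dotProduct, Finset.mul_sum, mul_left_comm]
  choose δ hδ hterm using exists_forall_prod_mul_det_submatrix_le hc.le hw X m
  set C : (Fin p → Fin n) → ℝ := fun f =>
    |∏ j, X (f j) j * m (f j)| * |(X.submatrix f id).det| * c ^ Fintype.card (Fin p)
  have hdecay : Tendsto (fun r => ∑ f, C f * Real.exp (-(r * δ f))) atTop (𝓝 0) := by
    simpa using tendsto_finsetSum Finset.univ fun f _ =>
      (Real.tendsto_exp_neg_atTop_nhds_zero.comp (tendsto_id.atTop_mul_const (hδ f))).const_mul
        (C f)
  refine tendsto_of_tendsto_of_tendsto_of_le_of_le' tendsto_const_nhds hdecay ?_ ?_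
  · filter_upwards with r
    refine Real.iSup_nonneg fun u => ?_
    rw [hdiag]
    exact det_transpose_mul_diagonal_mul_nonneg X fun i => mul_nonneg (hm i).le (hw _).1
  · filter_upwards [eventually_ge_atTop 0] with r hr
    refine Real.iSup_le (fun u => ?_) (Finset.sum_nonneg fun f _ => by positivity)
    rw [hdiag, det_transpose_mul_diagonal_mul]
    exact Finset.sum_le_sum fun f _ => hterm f u u.2 r hr

theorem stmt_17 (n p : ℕ) (hnp : p ≤ n)
    (w : ℝ → ℝ) (c : ℝ) (hc : 0 < c)
    (hw : ∀ z : ℝ, 0 ≤ w z ∧ w z ≤ c / (1 + Real.exp |z|))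
    (X : Matrix (Fin n) (Fin p) ℝ)
    (hspan : Submodule.span ℝ (Set.range fun i => (X i : Fin p → ℝ)) = ⊤)
    (m : Fin n → ℝ) (hm : ∀ i, 0 < m i)
    (W : EuclideanSpace ℝ (Fin p) → Matrix (Fin n) (Fin n) ℝ)
    (hW : ∀ β, W β = Matrix.diagonal (fun i => w (∑ j, X i j * β j))) :
    Filter.Tendsto
      (fun r : ℝ => ⨆ u : {u : EuclideanSpace ℝ (Fin p) // ‖u‖ = 1},
        (X.transpose * Matrix.diagonal m * W (r • (u : EuclideanSpace ℝ (Fin p))) * X).det)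
      Filter.atTop (nhds 0) :=
  stmt_17_general n p w c hc hw X m hm W hW
end
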